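/- For n ≥ 1, the map sending x_i to P_{0,i+1} and Z_{ij} to P_{i+1,j+1} induces an isomorphism from C[x_i, Z_{jk}] modulo the ideal generated by x_j Z_{ik} − x_k Z_{ij} − x_i Z_{jk} (for i<j<k) and the Plücker relations among the Z_{ij}, onto the Plücker algebra C[P_{ab} : 0 ≤ a < b ≤ n+1] / I_{2,n+2} of the Grassmannian Gr(2, n+2). -/
import Mathlib


open MvPolynomial

/-- Index type for pairs `a < b` in `Fin m`. -/
abbrev PIdx (m : ℕ) := {p : Fin m × Fin m // p.1 < p.2}

/-- The Plücker ideal `I_{2,n+2}`, generated by the three-term Plücker relations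
`P_{ab}P_{cd} - P_{ac}P_{bd} + P_{ad}P_{bc}` for `a < b < c < d`. -/
noncomputable def pluckerIdeal (m : ℕ) : Ideal (MvPolynomial (PIdx m) ℂ) :=
  Ideal.span {f | ∃ (a b c d : Fin m) (hab : a < b) (hbc : b < c) (hcd : c < d),
    f = X ⟨(a, b), hab⟩ * X ⟨(c, d), hcd⟩
      - X ⟨(a, c), hab.trans hbc⟩ * X ⟨(b, d), hbc.trans hcd⟩
      + X ⟨(a, d), (hab.trans hbc).trans hcd⟩ * X ⟨(b, c), hbc⟩}

/-- The map `x_i ↦ P_{0,i+1}`, `Z_{jk} ↦ P_{j+1,k+1}`, with values in the Plücker algebra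
`ℂ[P_{ab}] / I_{2,n+2}` of `Gr(2, n+2)`. -/
noncomputable def toPlucker (n : ℕ) :
    MvPolynomial (Fin (n + 1) ⊕ PIdx (n + 1)) ℂ →ₐ[ℂ]
      (MvPolynomial (PIdx (n + 2)) ℂ ⧸ pluckerIdeal (n + 2)) :=
  aeval (Sum.elim
    (fun i => Ideal.Quotient.mk _ (X ⟨(0, i.succ), i.succ_pos⟩))
    (fun p => Ideal.Quotient.mk _
      (X ⟨(p.1.1.succ, p.1.2.succ), Fin.succ_lt_succ_iff.mpr p.2⟩)))

/-- The ideal generated by `x_j Z_{ik} - x_k Z_{ij} - x_i Z_{jk}` (for `i < j < k`) and the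
Plücker relations among the `Z_{ij}`. -/
noncomputable def cotangentCoxIdeal (n : ℕ) :
    Ideal (MvPolynomial (Fin (n + 1) ⊕ PIdx (n + 1)) ℂ) :=
  Ideal.span
    ({f | ∃ (i j k : Fin (n + 1)) (hij : i < j) (hjk : j < k),
        f = X (Sum.inl j) * X (Sum.inr ⟨(i, k), hij.trans hjk⟩)
          - X (Sum.inl k) * X (Sum.inr ⟨(i, j), hij⟩)
          - X (Sum.inl i) * X (Sum.inr ⟨(j, k), hjk⟩)} ∪
     {f | ∃ (i j k l : Fin (n + 1)) (hij : i < j) (hjk : j < k) (hkl : k < l),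
        f = X (Sum.inr ⟨(i, j), hij⟩) * X (Sum.inr ⟨(k, l), hkl⟩)
          - X (Sum.inr ⟨(i, k), hij.trans hjk⟩) * X (Sum.inr ⟨(j, l), hjk.trans hkl⟩)
          + X (Sum.inr ⟨(i, l), (hij.trans hjk).trans hkl⟩) * X (Sum.inr ⟨(j, k), hjk⟩)})

def fmap (n : ℕ) : Fin (n + 1) ⊕ PIdx (n + 1) → PIdx (n + 2) :=
  Sum.elim
    (fun i => ⟨(0, i.succ), i.succ_pos⟩)
    (fun p => ⟨(p.1.1.succ, p.1.2.succ), Fin.succ_lt_succ_iff.mpr p.2⟩)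

theorem fmap_bijective (n : ℕ) : Function.Bijective (fmap n) := by
  constructor
  · rintro (i | ⟨⟨a,b⟩,hab⟩) (j | ⟨⟨c,d⟩,hcd⟩) h <;>
      simp only [fmap, Sum.elim_inl, Sum.elim_inr, Subtype.mk.injEq, Prod.mk.injEq] at h
    · simp [Fin.succ_injective _ h.2]
    · exact absurd h.1.symm (Fin.succ_ne_zero _)
    · exact absurd h.1 (Fin.succ_ne_zero _)
    · obtain ⟨h1, h2⟩ := h
      simp [Fin.succ_injective _ h1, Fin.succ_injective _ h2]
  · rintro ⟨⟨a, b⟩, hab⟩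
    have hb : b ≠ 0 := Fin.pos_iff_ne_zero.mp (lt_of_le_of_lt (Fin.zero_le a) hab)
    rcases eq_or_ne a 0 with rfl | ha
    · exact ⟨Sum.inl (b.pred hb), by simp [fmap]⟩
    · refine ⟨Sum.inr ⟨(a.pred ha, b.pred hb), ?_⟩, by simp [fmap]⟩
      rw [← Fin.succ_lt_succ_iff, Fin.succ_pred, Fin.succ_pred]; exact hab

theorem toPlucker_eq (n : ℕ) :
    toPlucker n = (Ideal.Quotient.mkₐ ℂ (pluckerIdeal (n + 2))).comp
      (rename (fmap n)) := by
  apply MvPolynomial.algHom_ext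
  rintro (i | p) <;> simp [toPlucker, fmap]

theorem map_cotangent (n : ℕ) :
    Ideal.map (rename (fmap n) : MvPolynomial _ ℂ →ₐ[ℂ] _).toRingHom
      (cotangentCoxIdeal n) = pluckerIdeal (n + 2) := by
  rw [cotangentCoxIdeal, Ideal.map_span, pluckerIdeal]
  apply le_antisymm
  · rw [Ideal.span_le]
    rintro _ ⟨g, hg, rfl⟩
    rcases hg with ⟨i, j, k, hij, hjk, rfl⟩ | ⟨i, j, k, l, hij, hjk, hkl, rfl⟩
    · have heq : (rename (fmap n) : MvPolynomial _ ℂ →ₐ[ℂ] _).toRingHom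
          (X (Sum.inl j) * X (Sum.inr ⟨(i, k), hij.trans hjk⟩)
            - X (Sum.inl k) * X (Sum.inr ⟨(i, j), hij⟩)
            - X (Sum.inl i) * X (Sum.inr ⟨(j, k), hjk⟩)) =
          -(X ⟨((0 : Fin (n + 2)), i.succ), i.succ_pos⟩
              * X ⟨(j.succ, k.succ), Fin.succ_lt_succ_iff.mpr hjk⟩
            - X ⟨((0 : Fin (n + 2)), j.succ), j.succ_pos⟩
              * X ⟨(i.succ, k.succ), Fin.succ_lt_succ_iff.mpr (hij.trans hjk)⟩
            + X ⟨((0 : Fin (n + 2)), k.succ), k.succ_pos⟩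
              * X ⟨(i.succ, j.succ), Fin.succ_lt_succ_iff.mpr hij⟩) := by
        simp only [AlgHom.toRingHom_eq_coe, RingHom.coe_coe, map_sub, map_mul, rename_X, fmap,
          Sum.elim_inl, Sum.elim_inr]
        ring
      rw [heq]
      exact neg_mem (Ideal.subset_span
        ⟨(0 : Fin (n + 2)), i.succ, j.succ, k.succ, i.succ_pos,
          Fin.succ_lt_succ_iff.mpr hij, Fin.succ_lt_succ_iff.mpr hjk, rfl⟩)
    · have heq : (rename (fmap n) : MvPolynomial _ ℂ →ₐ[ℂ] _).toRingHom
          (X (Sum.inr ⟨(i, j), hij⟩) * X (Sum.inr ⟨(k, l), hkl⟩)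
            - X (Sum.inr ⟨(i, k), hij.trans hjk⟩) * X (Sum.inr ⟨(j, l), hjk.trans hkl⟩)
            + X (Sum.inr ⟨(i, l), (hij.trans hjk).trans hkl⟩) * X (Sum.inr ⟨(j, k), hjk⟩)) =
          X ⟨(i.succ, j.succ), Fin.succ_lt_succ_iff.mpr hij⟩
              * X ⟨(k.succ, l.succ), Fin.succ_lt_succ_iff.mpr hkl⟩
            - X ⟨(i.succ, k.succ), Fin.succ_lt_succ_iff.mpr (hij.trans hjk)⟩
              * X ⟨(j.succ, l.succ), Fin.succ_lt_succ_iff.mpr (hjk.trans hkl)⟩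
            + X ⟨(i.succ, l.succ), Fin.succ_lt_succ_iff.mpr ((hij.trans hjk).trans hkl)⟩
              * X ⟨(j.succ, k.succ), Fin.succ_lt_succ_iff.mpr hjk⟩ := by
        simp only [AlgHom.toRingHom_eq_coe, RingHom.coe_coe, map_sub, map_add, map_mul, rename_X, fmap,
          Sum.elim_inl, Sum.elim_inr]
      rw [heq]
      exact Ideal.subset_span ⟨i.succ, j.succ, k.succ, l.succ,
        Fin.succ_lt_succ_iff.mpr hij, Fin.succ_lt_succ_iff.mpr hjk,
        Fin.succ_lt_succ_iff.mpr hkl, rfl⟩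
  · rw [Ideal.span_le]
    rintro _ ⟨a, b, c, d, hab, hbc, hcd, rfl⟩
    have hd : d ≠ 0 := Fin.pos_iff_ne_zero.mp
      (lt_of_le_of_lt (Fin.zero_le a) ((hab.trans hbc).trans hcd))
    have hc : c ≠ 0 := Fin.pos_iff_ne_zero.mp (lt_of_le_of_lt (Fin.zero_le a) (hab.trans hbc))
    have hb : b ≠ 0 := Fin.pos_iff_ne_zero.mp (lt_of_le_of_lt (Fin.zero_le a) hab)
    rcases eq_or_ne a 0 with rfl | ha
    · have hij : b.pred hb < c.pred hc := by
        rw [← Fin.succ_lt_succ_iff, Fin.succ_pred, Fin.succ_pred]; exact hbc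
      have hjk : c.pred hc < d.pred hd := by
        rw [← Fin.succ_lt_succ_iff, Fin.succ_pred, Fin.succ_pred]; exact hcd
      have heq : X ⟨((0 : Fin (n + 2)), b), hab⟩ * X ⟨(c, d), hcd⟩
            - X ⟨((0 : Fin (n + 2)), c), hab.trans hbc⟩ * X ⟨(b, d), hbc.trans hcd⟩
            + X ⟨((0 : Fin (n + 2)), d), (hab.trans hbc).trans hcd⟩ * X ⟨(b, c), hbc⟩ =
          -((rename (fmap n) : MvPolynomial _ ℂ →ₐ[ℂ] _).toRingHom
            (X (Sum.inl (c.pred hc)) * X (Sum.inr ⟨(b.pred hb, d.pred hd), hij.trans hjk⟩)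
              - X (Sum.inl (d.pred hd)) * X (Sum.inr ⟨(b.pred hb, c.pred hc), hij⟩)
              - X (Sum.inl (b.pred hb)) * X (Sum.inr ⟨(c.pred hc, d.pred hd), hjk⟩))) := by
        simp only [AlgHom.toRingHom_eq_coe, RingHom.coe_coe, map_sub, map_mul, rename_X, fmap,
          Sum.elim_inl, Sum.elim_inr, Fin.succ_pred]
        ring
      rw [heq]
      exact neg_mem (Ideal.subset_span
        ⟨_, Or.inl ⟨b.pred hb, c.pred hc, d.pred hd, hij, hjk, rfl⟩, rfl⟩)
    · have hb' : a.pred ha < b.pred hb := by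
        rw [← Fin.succ_lt_succ_iff, Fin.succ_pred, Fin.succ_pred]; exact hab
      have hc' : b.pred hb < c.pred hc := by
        rw [← Fin.succ_lt_succ_iff, Fin.succ_pred, Fin.succ_pred]; exact hbc
      have hd' : c.pred hc < d.pred hd := by
        rw [← Fin.succ_lt_succ_iff, Fin.succ_pred, Fin.succ_pred]; exact hcd
      have heq : X ⟨(a, b), hab⟩ * X ⟨(c, d), hcd⟩
            - X ⟨(a, c), hab.trans hbc⟩ * X ⟨(b, d), hbc.trans hcd⟩
            + X ⟨(a, d), (hab.trans hbc).trans hcd⟩ * X ⟨(b, c), hbc⟩ =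
          (rename (fmap n) : MvPolynomial _ ℂ →ₐ[ℂ] _).toRingHom
            (X (Sum.inr ⟨(a.pred ha, b.pred hb), hb'⟩)
                * X (Sum.inr ⟨(c.pred hc, d.pred hd), hd'⟩)
              - X (Sum.inr ⟨(a.pred ha, c.pred hc), hb'.trans hc'⟩)
                * X (Sum.inr ⟨(b.pred hb, d.pred hd), hc'.trans hd'⟩)
              + X (Sum.inr ⟨(a.pred ha, d.pred hd), (hb'.trans hc').trans hd'⟩)
                * X (Sum.inr ⟨(b.pred hb, c.pred hc), hc'⟩)) := by
        simp only [AlgHom.toRingHom_eq_coe, RingHom.coe_coe, map_sub, map_add, map_mul, rename_X, fmap,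
          Sum.elim_inl, Sum.elim_inr, Fin.succ_pred]
      rw [heq]
      exact Ideal.subset_span ⟨_, Or.inr ⟨a.pred ha, b.pred hb, c.pred hc, d.pred hd,
        hb', hc', hd', rfl⟩, rfl⟩

/-- The map `x_i ↦ P_{0,i+1}`, `Z_{ij} ↦ P_{i+1,j+1}` induces an isomorphism of
`ℂ[x_i, Z_{jk}]` modulo the stated relations onto the Plücker algebra of `Gr(2, n+2)`:
it is surjective and its kernel is exactly the ideal of relations. -/
theorem stmt_5 (n : ℕ) (hn : 1 ≤ n) :
    Function.Surjective (toPlucker n) ∧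
      RingHom.ker (toPlucker n) = cotangentCoxIdeal n := by
  have hbij : Function.Bijective
      ((rename (fmap n) : MvPolynomial (Fin (n + 1) ⊕ PIdx (n + 1)) ℂ →ₐ[ℂ]
        MvPolynomial (PIdx (n + 2)) ℂ)).toRingHom := by
    have := (renameEquiv ℂ (Equiv.ofBijective _ (fmap_bijective n))).bijective
    exact this
  constructor
  · rw [toPlucker_eq]
    intro y
    obtain ⟨p, rfl⟩ := Ideal.Quotient.mk_surjective y
    obtain ⟨q, rfl⟩ := hbij.2 p
    exact ⟨q, rfl⟩
  · have h1 : RingHom.ker (toPlucker n) =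
        Ideal.comap (rename (fmap n) : MvPolynomial (Fin (n + 1) ⊕ PIdx (n + 1)) ℂ →ₐ[ℂ]
          MvPolynomial (PIdx (n + 2)) ℂ).toRingHom (pluckerIdeal (n + 2)) := by
      ext x
      rw [RingHom.mem_ker, Ideal.mem_comap, toPlucker_eq]
      exact Ideal.Quotient.eq_zero_iff_mem
    rw [h1, ← map_cotangent n,
      Ideal.comap_map_of_bijective _ hbij]
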